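/- Let k be an algebraically closed field of characteristic ≠ 3, S = k⟦x,y,z⟧, and let (a,b,c) ∈ k³ satisfy a³+b³+c³ = 0 and abc ≠ 0. Then the Moore matrix X_{abc} = [[ax, bz, cy],[by, cx, az],[cz, ay, bx]] satisfies det X_{abc} = abc·(x³+y³+z³), and the pair (X_{abc}, (1/(abc))·adj(X_{abc})) is a matrix factorization of x³+y³+z³ with 2 factors. -/

import Mathlib

/-!
Expanding the determinant of the Moore matrix gives
`abc(x³ + y³ + z³) - (a³ + b³ + c³)xyz`, so on the curve `a³ + b³ + c³ = 0` it is the unit `abc`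
times the cubic. Then `M · adj M = adj M · M = det M · I`, and dividing the adjugate by `abc`
yields the second factor.
-/

open MvPowerSeries

section

variable {R : Type*} [CommRing R]

def mooreMatrix (a b c x y z : R) : Matrix (Fin 3) (Fin 3) R :=
  !![a * x, b * z, c * y; b * y, c * x, a * z; c * z, a * y, b * x]

theorem det_mooreMatrix (a b c x y z : R) :
    (mooreMatrix a b c x y z).det =
      a * b * c * (x ^ 3 + y ^ 3 + z ^ 3) - (a ^ 3 + b ^ 3 + c ^ 3) * (x * y * z) := by
  rw [mooreMatrix, Matrix.det_fin_three]
  simp only [Matrix.of_apply, Matrix.cons_val', Matrix.cons_val_zero, Matrix.cons_val_fin_one,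
    Matrix.cons_val_one, Matrix.cons_val]
  ring

def IsMatrixFactorization {n : Type*} [Fintype n] [DecidableEq n] (f : R)
    (Φ Ψ : Matrix n n R) : Prop :=
  Φ * Ψ = f • 1 ∧ Ψ * Φ = f • 1

theorem isMatrixFactorization_smul_adjugate {n : Type*} [Fintype n] [DecidableEq n]
    {M : Matrix n n R} {u v f : R} (hdet : M.det = u * f) (hvu : v * u = 1) :
    IsMatrixFactorization f M (v • M.adjugate) := by
  have hscale : v * M.det = f := by rw [hdet, ← mul_assoc, hvu, one_mul]
  constructor
  · rw [Matrix.mul_smul, Matrix.mul_adjugate, smul_smul, hscale]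
  · rw [Matrix.smul_mul, Matrix.adjugate_mul, smul_smul, hscale]

end

theorem moore_matrix_factorization_general {k : Type*} [Field k]
    (a b c : k) (habc : a ^ 3 + b ^ 3 + c ^ 3 = 0)
    (h0 : a * b * c ≠ 0) :
    let S := MvPowerSeries (Fin 3) k
    let x : S := X 0
    let y : S := X 1
    let z : S := X 2
    let M : Matrix (Fin 3) (Fin 3) S :=
      !![C (σ := Fin 3) (R := k) a * x, C (σ := Fin 3) (R := k) b * z, C (σ := Fin 3) (R := k) c * y;
         C (σ := Fin 3) (R := k) b * y, C (σ := Fin 3) (R := k) c * x, C (σ := Fin 3) (R := k) a * z;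
         C (σ := Fin 3) (R := k) c * z, C (σ := Fin 3) (R := k) a * y, C (σ := Fin 3) (R := k) b * x]
    M.det = C (σ := Fin 3) (R := k) (a * b * c) * (x ^ 3 + y ^ 3 + z ^ 3) ∧
      M * (C (σ := Fin 3) (R := k) (a * b * c)⁻¹ • M.adjugate)
        = (x ^ 3 + y ^ 3 + z ^ 3) • (1 : Matrix (Fin 3) (Fin 3) S) ∧
      (C (σ := Fin 3) (R := k) (a * b * c)⁻¹ • M.adjugate) * M
        = (x ^ 3 + y ^ 3 + z ^ 3) • (1 : Matrix (Fin 3) (Fin 3) S) := by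
  intro S x y z M
  have hdet : M.det = C (a * b * c) * (x ^ 3 + y ^ 3 + z ^ 3) := by
    change (mooreMatrix (C a) (C b) (C c) x y z).det = _
    rw [det_mooreMatrix]
    simp only [← map_pow, ← map_add, ← map_mul, habc, map_zero, zero_mul, sub_zero]
  have hinv : C (a * b * c)⁻¹ * C (a * b * c) = (1 : S) := by
    rw [← map_mul, inv_mul_cancel₀ h0, map_one]
  exact ⟨hdet, isMatrixFactorization_smul_adjugate hdet hinv⟩

/-- for `k` algebraically closed of characteristic `≠ 3`,
`S = k⟦x,y,z⟧`, and `(a,b,c) ∈ k³` with `a³+b³+c³ = 0` and `abc ≠ 0`, the Moore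
matrix `X_{abc}` has determinant `abc·(x³+y³+z³)` and together with
`(1/(abc))·adj(X_{abc})` forms a matrix factorization of `x³+y³+z³` with 2 factors. -/
theorem moore_matrix_factorization {k : Type*} [Field k] [IsAlgClosed k]
    (hchar : (3 : k) ≠ 0) (a b c : k) (habc : a ^ 3 + b ^ 3 + c ^ 3 = 0)
    (h0 : a * b * c ≠ 0) :
    let S := MvPowerSeries (Fin 3) k
    let x : S := X 0
    let y : S := X 1
    let z : S := X 2
    let M : Matrix (Fin 3) (Fin 3) S :=
      !![C (σ := Fin 3) (R := k) a * x, C (σ := Fin 3) (R := k) b * z, C (σ := Fin 3) (R := k) c * y;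
         C (σ := Fin 3) (R := k) b * y, C (σ := Fin 3) (R := k) c * x, C (σ := Fin 3) (R := k) a * z;
         C (σ := Fin 3) (R := k) c * z, C (σ := Fin 3) (R := k) a * y, C (σ := Fin 3) (R := k) b * x]
    M.det = C (σ := Fin 3) (R := k) (a * b * c) * (x ^ 3 + y ^ 3 + z ^ 3) ∧
      M * (C (σ := Fin 3) (R := k) (a * b * c)⁻¹ • M.adjugate)
        = (x ^ 3 + y ^ 3 + z ^ 3) • (1 : Matrix (Fin 3) (Fin 3) S) ∧
      (C (σ := Fin 3) (R := k) (a * b * c)⁻¹ • M.adjugate) * M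
        = (x ^ 3 + y ^ 3 + z ^ 3) • (1 : Matrix (Fin 3) (Fin 3) S) :=
  moore_matrix_factorization_general a b c habc h0
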